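/- arXiv:1508.07228 — 2 statements merged into one kernel-verified Lean document; each statement's English description precedes it below -/
import Mathlib

section
/- Let G be a nontrivial finite simple group. Then the character graph Γ(G) associated with codegrees is a complete graph; that is, for any two nonprincipal irreducible complex characters θ and ψ of G (not necessarily distinct), gcd(a(θ), a(ψ)) ≠ 1. -/
/-!
Let `χ` be a nonprincipal irreducible character of degree `d` of the simple group `G`. Its kernel
is a proper normal subgroup, hence trivial, so `a(χ) = |G| / d`. Frobenius' theorem gives
`d ∣ |G|`, and `d² < |G|` because `∑ g, |χ g|² = |G|` while `∑ g, χ g = 0` forces `χ` to be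
nonzero somewhere off the identity. If `|G| / d` and `|G| / e` were coprime, their product would
divide `|G|`, so `|G| ≤ d e < |G|`.
-/

open CategoryTheory

/-- The codegree `a(χ) = |G : ker χ| / χ(1)` of the character `χ` of the
finite-dimensional complex representation `V` of `G`. -/
noncomputable def codegree {G : Type} [Group G] (V : FDRep ℂ G) : ℕ :=
  (MonoidHom.ker V.ρ).index / Module.finrank ℂ V

open Module

namespace Module.End

variable {K V : Type*} [Field K] [AddCommGroup V] [Module K V] {f : End K V}

lemma pow_apply_of_mem_eigenspace {μ : K} {x : V} (hx : x ∈ f.eigenspace μ) (k : ℕ) :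
    (f ^ k) x = μ ^ k • x := by
  induction k with
  | zero => simp
  | succ k ih =>
    rw [pow_succ, mul_apply, mem_eigenspace_iff.mp hx, map_smul, ih, smul_smul, pow_succ']

lemma exists_trace_pow_eq_sum_of_iSup_eigenspace_eq_top [FiniteDimensional K V]
    (hf : ⨆ μ, f.eigenspace μ = ⊤) :
    ∃ (s : Finset K) (m : K → ℕ), (∀ μ ∈ s, f.HasEigenvalue μ) ∧
      ∀ k : ℕ, LinearMap.trace K V (f ^ k) = ∑ μ ∈ s, (m μ : K) * μ ^ k := by
  classical
  have hint : DirectSum.IsInternal f.eigenspace :=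
    DirectSum.isInternal_submodule_of_iSupIndep_of_iSup_eq_top f.eigenspaces_iSupIndep hf
  have hfin : {μ | f.eigenspace μ ≠ ⊥}.Finite :=
    WellFoundedGT.finite_ne_bot_of_iSupIndep f.eigenspaces_iSupIndep
  refine ⟨hfin.toFinset, fun μ ↦ finrank K (f.eigenspace μ), fun μ hμ ↦ ?_, fun k ↦ ?_⟩
  · exact hasEigenvalue_iff.mpr (by simpa using hμ)
  have hmaps : ∀ μ, Set.MapsTo (f ^ k) (f.eigenspace μ) (f.eigenspace μ) := fun μ x hx ↦ by
    rw [SetLike.mem_coe, pow_apply_of_mem_eigenspace hx]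
    exact Submodule.smul_mem _ _ hx
  rw [LinearMap.trace_eq_sum_trace_restrict' hint hfin hmaps]
  refine Finset.sum_congr rfl fun μ _ ↦ ?_
  have hres : (f ^ k).restrict (hmaps μ) = μ ^ k • LinearMap.id :=
    LinearMap.ext fun x ↦ Subtype.ext (pow_apply_of_mem_eigenspace x.2 k)
  rw [hres, map_smul, LinearMap.trace_id, smul_eq_mul, mul_comm]

lemma HasEigenvalue.pow_eq_one {μ : K} {n : ℕ} (hμ : f.HasEigenvalue μ) (hf : f ^ n = 1) :
    μ ^ n = 1 := by
  obtain ⟨v, hv⟩ := hμ.exists_hasEigenvector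
  have h := hv.pow_apply n
  rw [hf, one_apply] at h
  exact smul_left_injective K hv.2 (h.symm.trans (one_smul K v).symm)

lemma isSemisimple_of_pow_eq_one [IsAlgClosed K] {n : ℕ} (hn : (n : K) ≠ 0) (hf : f ^ n = 1) :
    f.IsSemisimple :=
  isSemisimple_of_squarefree_aeval_eq_zero
    (Polynomial.separable_X_pow_sub_C (1 : K) hn one_ne_zero).squarefree (by simp [hf])

end Module.End

lemma Nat.dvd_of_natCast_eq_mul_of_isIntegral {α : Type*} [Field α] [CharZero α] {a b : ℕ}
    {c : α} (hc : IsIntegral ℤ c) (h : (a : α) = c * b) : b ∣ a := by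
  rcases eq_or_ne b 0 with rfl | hb
  · simp_all
  have hb' : (b : α) ≠ 0 := Nat.cast_ne_zero.mpr hb
  obtain ⟨k, hk⟩ := hc.exists_int_iff_exists_rat.mp ⟨a / b, by push_cast; field_simp; exact h.symm⟩
  rw [hk] at h
  exact Int.natCast_dvd_natCast.mp ⟨k, by exact_mod_cast h.trans (mul_comm _ _)⟩

lemma Nat.not_coprime_div_div_of_mul_self_lt {N d e : ℕ} (hd : d ∣ N) (he : e ∣ N)
    (hdN : d * d < N) (heN : e * e < N) : ¬ Nat.Coprime (N / d) (N / e) := by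
  intro hcop
  have hN : 0 < N := by omega
  have hle : N / d * (N / e) ≤ N := Nat.le_of_dvd hN
    (hcop.mul_dvd_of_dvd_of_dvd (Nat.div_dvd_of_dvd hd) (Nat.div_dvd_of_dvd he))
  have hNN : N / d * (N / e) * (d * e) = N * N := by
    rw [mul_mul_mul_comm, Nat.div_mul_cancel hd, Nat.div_mul_cancel he]
  have hde : d * e < N := by nlinarith
  refine lt_irrefl (N * N) ?_
  calc N * N = N / d * (N / e) * (d * e) := hNN.symm
    _ ≤ N * (d * e) := Nat.mul_le_mul_right _ hle
    _ < N * N := Nat.mul_lt_mul_of_pos_left hde hN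

namespace FDRep

variable {G : Type} [Group G] (V : FDRep ℂ G)

lemma nontrivial_of_simple [Simple V] : Nontrivial V := by
  by_contra h
  rw [not_nontrivial_iff_subsingleton] at h
  exact id_nonzero V (by ext x; exact Subsingleton.elim _ _)

lemma exists_eq_smul_one_of_commute [Simple V] {T : End ℂ V} (hT : ∀ g, Commute T (V.ρ g)) :
    ∃ c : ℂ, T = c • 1 := by
  let η : V ⟶ V := ⟨FGModuleCat.ofHom T, fun g ↦ by ext x; exact congrArg (· x) (hT g).eq⟩
  obtain ⟨c, hc⟩ := endomorphism_simple_eq_smul_id ℂ η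
  exact ⟨c, congrArg (fun φ : V ⟶ V ↦ φ.hom.hom.hom) hc.symm⟩

section Finite

variable [Finite G]

lemma exists_char_pow_eq_sum (g : G) :
    ∃ (s : Finset ℂ) (m : ℂ → ℕ), (∀ μ ∈ s, μ ^ orderOf g = 1) ∧
      ∀ k : ℕ, V.character (g ^ k) = ∑ μ ∈ s, (m μ : ℂ) * μ ^ k := by
  have hg : V.ρ g ^ orderOf g = 1 := by rw [← map_pow, pow_orderOf_eq_one, map_one]
  have hss := End.isSemisimple_of_pow_eq_one (Nat.cast_ne_zero.mpr (orderOf_pos g).ne') hg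
  obtain ⟨s, m, hs, htr⟩ :=
    End.exists_trace_pow_eq_sum_of_iSup_eigenspace_eq_top hss.iSup_eigenspace_eq_top
  refine ⟨s, m, fun μ hμ ↦ (hs μ hμ).pow_eq_one hg, fun k ↦ ?_⟩
  rw [character, map_pow, htr]

lemma char_inv (g : G) : V.character g⁻¹ = starRingEnd ℂ (V.character g) := by
  obtain ⟨s, m, hs, hchar⟩ := V.exists_char_pow_eq_sum g
  have hn : orderOf g - 1 + 1 = orderOf g := Nat.sub_add_cancel (orderOf_pos g)
  have hinv : g⁻¹ = g ^ (orderOf g - 1) :=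
    (eq_inv_of_mul_eq_one_left (by rw [← pow_succ, hn, pow_orderOf_eq_one])).symm
  rw [hinv, hchar, show V.character g = _ by simpa using hchar 1, map_sum]
  refine Finset.sum_congr rfl fun μ hμ ↦ ?_
  have hμinv : μ ^ (orderOf g - 1) = μ⁻¹ :=
    eq_inv_of_mul_eq_one_left (by rw [← pow_succ, hn, hs μ hμ])
  rw [hμinv, map_mul, Complex.conj_natCast,
    Complex.inv_eq_conj (Complex.norm_eq_one_of_pow_eq_one (hs μ hμ) (orderOf_pos g).ne')]

lemma isIntegral_char (g : G) : IsIntegral ℤ (V.character g) := by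
  obtain ⟨s, m, hs, hchar⟩ := V.exists_char_pow_eq_sum g
  rw [show V.character g = _ by simpa using hchar 1]
  refine IsIntegral.sum _ fun μ hμ ↦ (isIntegral_algebraMap (x := (m μ : ℤ))).mul ?_
  exact IsIntegral.of_pow (orderOf_pos g) (by rw [hs μ hμ]; exact isIntegral_one)

end Finite

section Fintype

variable [Fintype G]

lemma commute_sum_smul_of_conj {φ : G → ℂ} (hφ : ∀ g h, φ (h * g * h⁻¹) = φ g) (s : G) :
    Commute (∑ g, φ g • V.ρ g) (V.ρ s) := by
  simp only [Commute, SemiconjBy, Finset.sum_mul, Finset.mul_sum, smul_mul_assoc, mul_smul_comm,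
    ← map_mul]
  refine Fintype.sum_equiv (MulAut.conj s⁻¹).toEquiv _ _ fun g ↦ ?_
  simp [← mul_assoc, ← hφ g s⁻¹]

lemma char_eq_one_of_ρ_eq_one [Simple V] (hρ : V.ρ = 1) : V.character = 1 := by
  have hchar : ∀ g, V.character g = finrank ℂ V := fun g ↦ by simp [character, hρ]
  have h := (simple_iff_char_is_norm_one V).mp ‹_›
  simp only [hchar, Finset.sum_const, Finset.card_univ, nsmul_eq_mul,
    Fintype.card_eq_nat_card] at h
  have hd : finrank ℂ V * finrank ℂ V = 1 := by
    have hG : (Nat.card G : ℂ) ≠ 0 := Nat.cast_ne_zero.mpr Nat.card_pos.ne'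
    exact_mod_cast mul_left_cancel₀ hG (h.trans (mul_one _).symm)
  funext g
  rw [hchar, Nat.eq_one_of_mul_eq_one_right hd, Nat.cast_one, Pi.one_apply]

lemma sum_char_eq_zero [Simple V] (hρ : V.ρ ≠ 1) : ∑ g, V.character g = 0 := by
  set P := ∑ g, V.ρ g
  obtain ⟨c, hc⟩ := V.exists_eq_smul_one_of_commute (T := P)
    (by simpa using V.commute_sum_smul_of_conj (φ := fun _ ↦ 1) fun _ _ ↦ rfl)
  have habsorb : ∀ s, V.ρ s * P = P := fun s ↦ by
    simp only [P, Finset.mul_sum, ← map_mul]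
    exact Fintype.sum_equiv (Equiv.mulLeft s) _ _ fun _ ↦ rfl
  have hc0 : c = 0 := by
    by_contra hc0
    refine hρ (MonoidHom.ext fun s ↦ smul_right_injective _ hc0 ?_)
    simpa [hc] using habsorb s
  calc ∑ g, V.character g = LinearMap.trace ℂ V P := (map_sum _ _ _).symm
    _ = 0 := by rw [hc, hc0, zero_smul, map_zero]

lemma sum_normSq_char [Simple V] : ∑ g, Complex.normSq (V.character g) = Nat.card G := by
  have h := (simple_iff_char_is_norm_one V).mp ‹_›
  simp_rw [char_inv, Complex.mul_conj] at h
  exact_mod_cast h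

lemma finrank_mul_self_lt_card [Simple V] (hρ : V.ρ ≠ 1) :
    finrank ℂ V * finrank ℂ V < Nat.card G := by
  classical
  rcases Nat.eq_zero_or_pos (finrank ℂ V) with hd | hd
  · simpa [hd] using Nat.card_pos (α := G)
  obtain ⟨g, hg, hχg⟩ : ∃ g ∈ Finset.univ.erase 1, V.character g ≠ 0 := by
    refine Finset.exists_ne_zero_of_sum_ne_zero ?_
    rw [Finset.sum_erase_eq_sub (Finset.mem_univ 1), V.sum_char_eq_zero hρ, char_one]
    simpa using hd.ne'
  have hpair : Complex.normSq (V.character 1) + Complex.normSq (V.character g) ≤ Nat.card G := by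
    rw [← Finset.sum_pair (f := fun x ↦ Complex.normSq (V.character x))
      (Finset.ne_of_mem_erase hg).symm, ← V.sum_normSq_char]
    exact Finset.sum_le_univ_sum_of_nonneg fun _ ↦ Complex.normSq_nonneg _
  rw [char_one, Complex.normSq_natCast] at hpair
  exact_mod_cast (lt_add_of_pos_right _ (Complex.normSq_pos.mpr hχg)).trans_le hpair

lemma isIntegral_of_sum_smul_eq_smul_one [Nontrivial V] {φ : G → ℂ}
    (hφ : ∀ g, IsIntegral ℤ (φ g)) {c : ℂ} (hc : ∑ g, φ g • V.ρ g = c • 1) : IsIntegral ℤ c := by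
  let R := integralClosure ℤ ℂ
  let A := Algebra.adjoin R (Set.range fun g ↦ V.ρ g)
  have hA : A.toSubmodule.FG := by
    rw [Algebra.adjoin_eq_span]
    refine Submodule.fg_span ?_
    rw [← MonoidHom.coe_mrange, Submonoid.closure_eq]
    exact Set.finite_range _
  have hmem : c • (1 : End ℂ V) ∈ A := by
    rw [← hc]
    exact Subalgebra.sum_mem _ fun g _ ↦
      Subalgebra.smul_mem A (Algebra.subset_adjoin ⟨g, rfl⟩) (⟨φ g, hφ g⟩ : R)
  have hinj : Function.Injective ((Algebra.ofId ℂ (End ℂ V)).restrictScalars R) :=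
    (algebraMap ℂ (End ℂ V)).injective
  refine isIntegral_trans (A := R) c ((isIntegral_algHom_iff _ hinj).mp ?_)
  exact IsIntegral.of_mem_of_fg A hA _ (by simpa [Algebra.smul_def] using hmem)

/-- Frobenius: by Schur, `∑ g, χ g⁻¹ • ρ g` is a scalar `c`, with `c * d = |G|` by orthogonality,
and `c` is an algebraic integer since that sum lies in the span of `ρ(G)` over the algebraic
integers. -/
lemma finrank_dvd_card [Simple V] : finrank ℂ V ∣ Nat.card G := by
  have := V.nontrivial_of_simple
  obtain ⟨c, hc⟩ := V.exists_eq_smul_one_of_commute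
    (V.commute_sum_smul_of_conj (φ := fun g ↦ V.character g⁻¹) fun g h ↦ by
      simpa [mul_assoc] using V.char_conj g⁻¹ h)
  have htrace : (Nat.card G : ℂ) = c * finrank ℂ V := by
    rw [← (simple_iff_char_is_norm_one V).mp ‹_›]
    simpa [map_sum, character, mul_comm] using congrArg (LinearMap.trace ℂ V) hc
  exact Nat.dvd_of_natCast_eq_mul_of_isIntegral
    (V.isIntegral_of_sum_smul_eq_smul_one (fun _ ↦ V.isIntegral_char _) hc) htrace

lemma ker_ρ_eq_bot [IsSimpleGroup G] [Simple V] (hV : V.character ≠ 1) : V.ρ.ker = ⊥ :=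
  (IsSimpleGroup.eq_bot_or_eq_top_of_normal _ inferInstance).resolve_right fun h ↦
    hV (V.char_eq_one_of_ρ_eq_one (MonoidHom.ker_eq_top_iff.mp h))

lemma codegree_eq_card_div_finrank [IsSimpleGroup G] [Simple V] (hV : V.character ≠ 1) :
    codegree V = Nat.card G / finrank ℂ V := by
  rw [codegree, V.ker_ρ_eq_bot hV, Subgroup.index_bot]

end Fintype

end FDRep

/-- The character graph associated with codegrees of a finite simple group is complete:
any two nonprincipal irreducible characters have non-coprime codegrees. -/
theorem codegreeGraph_complete_of_simple {G : Type} [Group G] [Finite G] [IsSimpleGroup G]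
    (V W : FDRep ℂ G) (hV : Simple V) (hW : Simple W)
    (hV1 : V.character ≠ 1) (hW1 : W.character ≠ 1) :
    Nat.gcd (codegree V) (codegree W) ≠ 1 := by
  have := Fintype.ofFinite G
  rw [V.codegree_eq_card_div_finrank hV1, W.codegree_eq_card_div_finrank hW1]
  exact Nat.not_coprime_div_div_of_mul_self_lt V.finrank_dvd_card W.finrank_dvd_card
    (V.finrank_mul_self_lt_card (mt V.char_eq_one_of_ρ_eq_one hV1))
    (W.finrank_mul_self_lt_card (mt W.char_eq_one_of_ρ_eq_one hW1))
end

section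
/- Let G be a nontrivial finite abelian group whose character graph associated with codegrees has no triangles. Then G is cyclic of order 2 or cyclic of order 3. -/
/-!
For abelian `G` every linear character `χ : G →* ℂˣ` is an irreducible character, and its
codegree `|G : ker χ|` is a multiple of the order of `χ` in the dual group `Ĝ ≅ G`. Hence a
triangle exists as soon as `Ĝ` has three distinct elements whose orders share a prime `p`, and
every finite abelian group of order at least `4` does: if its exponent is prime, any three
nontrivial elements will do; otherwise take `x` of order `n = exp G`, `x⁻¹` and `x ^ (n / p)`
with `p` the least prime factor of `n`.
-/

open CategoryTheory

/-- The character graph of `G` associated with codegrees: vertices are the nonprincipal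
irreducible complex characters of `G`, two distinct characters being adjacent iff their
codegrees are not coprime. -/
def codegreeGraph (G : Type) [Group G] :
    SimpleGraph {χ : G → ℂ // (∃ V : FDRep ℂ G, Simple V ∧ V.character = χ) ∧ χ ≠ 1} where
  Adj χ ψ := χ ≠ ψ ∧ ∃ V W : FDRep ℂ G, Simple V ∧ Simple W ∧
    V.character = χ.1 ∧ W.character = ψ.1 ∧ Nat.gcd (codegree V) (codegree W) ≠ 1
  symm := ⟨fun χ ψ ⟨hne, V, W, hV, hW, hVχ, hWψ, h⟩ =>
    ⟨hne.symm, W, V, hW, hV, hWψ, hVχ, by rwa [Nat.gcd_comm]⟩⟩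
  loopless := ⟨fun χ h => h.1 rfl⟩

theorem MonoidHom.orderOf_dvd_index_ker {G M : Type*} [Group G] [CommGroup M] (χ : G →* M) :
    orderOf χ ∣ χ.ker.index :=
  orderOf_dvd_of_pow_eq_one <| MonoidHom.ext fun g => by
    simpa [← map_pow] using χ.ker.pow_index_mem g

theorem linearChar_coe_injective {G : Type*} [MulOneClass G] {k : Type*} [Monoid k] :
    Function.Injective fun (χ : G →* kˣ) (g : G) => (χ g : k) :=
  fun _ _ h => MonoidHom.ext fun g => Units.ext (congrFun h g)

section LinearCharacter

variable {k G : Type} [Field k] [Group G]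

noncomputable def linearCharRep (χ : G →* kˣ) : Representation k G k :=
  (Algebra.lmul k k).toMonoidHom.comp ((Units.coeHom k).comp χ)

@[simp]
theorem linearCharRep_apply (χ : G →* kˣ) (g : G) (x : k) :
    linearCharRep χ g x = χ g * x :=
  rfl

theorem ker_linearCharRep (χ : G →* kˣ) : (linearCharRep χ).ker = χ.ker := by
  ext g
  refine ⟨fun hg => Units.ext ?_, fun hg => LinearMap.ext fun x => ?_⟩
  · simpa using LinearMap.congr_fun hg 1
  · simp [(MonoidHom.mem_ker).mp hg]

theorem char_linearCharRep (χ : G →* kˣ) (g : G) :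
    (FDRep.of (linearCharRep χ)).character g = χ g :=
  Algebra.trace_self_apply (R := k) _

theorem codegree_linearCharRep (χ : G →* ℂˣ) :
    codegree (FDRep.of (linearCharRep χ)) = χ.ker.index := by
  rw [codegree, Module.finrank_self, Nat.div_one]
  exact congrArg Subgroup.index (ker_linearCharRep χ)

theorem orderOf_dvd_codegree_linearCharRep (χ : G →* ℂˣ) :
    orderOf χ ∣ codegree (FDRep.of (linearCharRep χ)) :=
  codegree_linearCharRep χ ▸ χ.orderOf_dvd_index_ker

theorem simple_linearCharRep [Finite G] (χ : G →* ℂˣ) : Simple (FDRep.of (linearCharRep χ)) := by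
  have := Fintype.ofFinite G
  rw [FDRep.simple_iff_char_is_norm_one]
  simp [char_linearCharRep, Nat.card_eq_fintype_card]

end LinearCharacter

theorem exists_prime_three_distinct_dvd_orderOf_of_orderOf_not_prime {H : Type*} [Group H]
    {x : H} (h0 : orderOf x ≠ 0) (h1 : orderOf x ≠ 1) (hx : ¬ (orderOf x).Prime) :
    ∃ p, p.Prime ∧ ∃ x y z : H, x ≠ y ∧ x ≠ z ∧ y ≠ z ∧
      p ∣ orderOf x ∧ p ∣ orderOf y ∧ p ∣ orderOf z := by
  set p := (orderOf x).minFac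
  have hp : p.Prime := Nat.minFac_prime h1
  have hpx : p ≠ orderOf x := fun h => hx (h ▸ hp)
  have horder : orderOf (x ^ (orderOf x / p)) = p := orderOf_pow_orderOf_div h0 (Nat.minFac_dvd _)
  have hx_ne_inv : x ≠ x⁻¹ := fun h => by
    have hdvd : orderOf x ∣ 2 :=
      orderOf_dvd_of_pow_eq_one ((sq x).trans (mul_eq_one_iff_eq_inv.mpr h))
    have h2 : orderOf x = 2 := by have := Nat.le_of_dvd two_pos hdvd; omega
    exact hx (h2 ▸ Nat.prime_two)
  refine ⟨p, hp, x, x⁻¹, x ^ (orderOf x / p), hx_ne_inv, ?_, ?_, Nat.minFac_dvd _,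
    (orderOf_inv x).symm ▸ Nat.minFac_dvd _, horder.symm.dvd⟩
  · exact fun h => hpx (horder ▸ h ▸ rfl)
  · exact fun h => hpx (horder ▸ h ▸ orderOf_inv x)

theorem Monoid.exists_three_distinct_exponent_dvd_orderOf {H : Type*} [Monoid H]
    [Finite H] (hcard : 4 ≤ Nat.card H) (hexp : (Monoid.exponent H).Prime) :
    ∃ x y z : H, x ≠ y ∧ x ≠ z ∧ y ≠ z ∧ Monoid.exponent H ∣ orderOf x ∧
      Monoid.exponent H ∣ orderOf y ∧ Monoid.exponent H ∣ orderOf z := by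
  classical
  have := Fintype.ofFinite H
  have horder (y : H) (hy : y ≠ 1) : Monoid.exponent H ∣ orderOf y :=
    (((Nat.dvd_prime hexp).mp (Monoid.order_dvd_exponent y)).resolve_left
      (orderOf_eq_one_iff.not.mpr hy)).symm.dvd
  have hthree : 2 < (Finset.univ.erase (1 : H)).card := by
    rw [Finset.card_erase_of_mem (Finset.mem_univ _), Finset.card_univ,
      ← Nat.card_eq_fintype_card]
    omega
  obtain ⟨a, ha, b, hb, c, hc, hab, hac, hbc⟩ := Finset.two_lt_card.mp hthree
  exact ⟨a, b, c, hab, hac, hbc, horder a (Finset.ne_of_mem_erase ha),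
    horder b (Finset.ne_of_mem_erase hb), horder c (Finset.ne_of_mem_erase hc)⟩

theorem CommGroup.exists_prime_three_distinct_dvd_orderOf {H : Type*} [CommGroup H] [Finite H]
    (hcard : 4 ≤ Nat.card H) :
    ∃ p, p.Prime ∧ ∃ x y z : H, x ≠ y ∧ x ≠ z ∧ y ≠ z ∧
      p ∣ orderOf x ∧ p ∣ orderOf y ∧ p ∣ orderOf z := by
  obtain ⟨x, hx⟩ := Monoid.exists_orderOf_eq_exponent (Monoid.ExponentExists.of_finite (G := H))
  by_cases hexp : (Monoid.exponent H).Prime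
  · exact ⟨_, hexp, Monoid.exists_three_distinct_exponent_dvd_orderOf hcard hexp⟩
  have hexp1 : Monoid.exponent H ≠ 1 := by
    rw [Ne, Monoid.exp_eq_one_iff, ← not_nontrivial_iff_subsingleton, not_not,
      ← Finite.one_lt_card_iff_nontrivial]
    omega
  rw [← hx] at hexp hexp1
  exact exists_prime_three_distinct_dvd_orderOf_of_orderOf_not_prime
    (hx ▸ Monoid.exponent_ne_zero_of_finite) hexp1 hexp

section CodegreeGraph

variable {G : Type} [Group G] [Finite G]

noncomputable def linearCharVertex (χ : G →* ℂˣ) (hχ : χ ≠ 1) :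
    {f : G → ℂ // (∃ V : FDRep ℂ G, Simple V ∧ V.character = f) ∧ f ≠ 1} :=
  ⟨fun g => χ g, ⟨_, simple_linearCharRep χ, funext (char_linearCharRep χ)⟩,
    fun h => hχ (linearChar_coe_injective (funext fun g => by simpa using congrFun h g))⟩

theorem codegreeGraph_adj_linearCharVertex {p : ℕ} (hp : p.Prime) {χ ψ : G →* ℂˣ}
    (hχ : χ ≠ 1) (hψ : ψ ≠ 1) (hne : χ ≠ ψ) (hpχ : p ∣ orderOf χ) (hpψ : p ∣ orderOf ψ) :
    (codegreeGraph G).Adj (linearCharVertex χ hχ) (linearCharVertex ψ hψ) := by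
  refine ⟨fun h => hne (linearChar_coe_injective (congrArg Subtype.val h)), _, _,
    simple_linearCharRep χ, simple_linearCharRep ψ, funext (char_linearCharRep χ),
    funext (char_linearCharRep ψ), fun h => hp.not_dvd_one ?_⟩
  rw [← h]
  exact Nat.dvd_gcd (hpχ.trans (orderOf_dvd_codegree_linearCharRep χ))
    (hpψ.trans (orderOf_dvd_codegree_linearCharRep ψ))

theorem codegreeGraph_not_cliqueFree_three {p : ℕ} (hp : p.Prime) {χ₁ χ₂ χ₃ : G →* ℂˣ}
    (h₁₂ : χ₁ ≠ χ₂) (h₁₃ : χ₁ ≠ χ₃) (h₂₃ : χ₂ ≠ χ₃)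
    (hp₁ : p ∣ orderOf χ₁) (hp₂ : p ∣ orderOf χ₂) (hp₃ : p ∣ orderOf χ₃) :
    ¬ (codegreeGraph G).CliqueFree 3 := by
  have ne_one {χ : G →* ℂˣ} (h : p ∣ orderOf χ) : χ ≠ 1 := by
    rintro rfl
    exact hp.not_dvd_one (orderOf_one (G := G →* ℂˣ) ▸ h)
  classical
  intro hfree
  apply hfree {linearCharVertex χ₁ (ne_one hp₁), linearCharVertex χ₂ (ne_one hp₂),
    linearCharVertex χ₃ (ne_one hp₃)}
  rw [SimpleGraph.is3Clique_triple_iff]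
  exact ⟨codegreeGraph_adj_linearCharVertex hp _ _ h₁₂ hp₁ hp₂,
    codegreeGraph_adj_linearCharVertex hp _ _ h₁₃ hp₁ hp₃,
    codegreeGraph_adj_linearCharVertex hp _ _ h₂₃ hp₂ hp₃⟩

end CodegreeGraph

/-- A nontrivial finite abelian group whose character graph associated with codegrees has no
triangles is cyclic of order `2` or `3`. -/
theorem abelian_of_codegreeGraph_triangle_free {G : Type} [Group G] [Finite G] [Nontrivial G]
    (hab : ∀ a b : G, a * b = b * a)
    (h : (codegreeGraph G).CliqueFree 3) :
    IsCyclic G ∧ (Nat.card G = 2 ∨ Nat.card G = 3) := by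
  let _ : CommGroup G := { ‹Group G› with mul_comm := hab }
  have hcard : Nat.card G < 4 := by
    by_contra! hcard
    rw [← CommGroup.card_monoidHom_of_hasEnoughRootsOfUnity G ℂ] at hcard
    obtain ⟨p, hp, χ₁, χ₂, χ₃, h₁₂, h₁₃, h₂₃, hp₁, hp₂, hp₃⟩ :=
      CommGroup.exists_prime_three_distinct_dvd_orderOf hcard
    exact codegreeGraph_not_cliqueFree_three hp h₁₂ h₁₃ h₂₃ hp₁ hp₂ hp₃ h
  have hcard' : Nat.card G = 2 ∨ Nat.card G = 3 := by
    have := Finite.one_lt_card (α := G)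
    omega
  rcases hcard' with hc | hc
  · exact ⟨@isCyclic_of_prime_card _ _ _ ⟨Nat.prime_two⟩ hc, .inl hc⟩
  · exact ⟨@isCyclic_of_prime_card _ _ _ ⟨Nat.prime_three⟩ hc, .inr hc⟩
end
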